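/- Let W : X1 × X2 → Y be a MAC on finite alphabets, let k1, k2, ℓ be positive integers, and let P(x1,x2,j|i1,i2,y) (x1∈X1, x2∈X2, j∈[ℓ], i1∈[k1], i2∈[k2], y∈Y) be a tripartite non-signaling box with outputs x1, x2, j and inputs i1, i2, y. Define the concatenated MAC W[P] : [k1] × [k2] → [ℓ] by W[P](j|i1,i2) := Σ_{x1,x2,y} W(y|x1,x2) P(x1,x2,j|i1,i2,y). Then the (unassisted) capacity region of W[P] is contained in the non-signaling assisted capacity region of W: C(W[P]) ⊆ C^NS(W). -/

import Mathlib

open Finset Filter Topology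

section Defs

variable {X1 X2 Y : Type*}

/-- The `n`-fold memoryless extension `W^{⊗n}` of a multiple-access channel `W`. -/
def macPow (n : ℕ) (W : X1 → X2 → Y → ℝ) :
    (Fin n → X1) → (Fin n → X2) → (Fin n → Y) → ℝ :=
  fun x1 x2 y => ∏ i, W (x1 i) (x2 i) (y i)

/-- A tripartite non-signaling box `P(x1,x2,j|i1,i2,y)` with decoder output alphabet
`J`.  Arguments of `P` are in the order `x1 x2 j i1 i2 y`. -/
def IsNSBox [Fintype X1] [Fintype X2] [Fintype Y] {J : Type*} [Fintype J] (k1 k2 : ℕ)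
    (P : X1 → X2 → J → Fin k1 → Fin k2 → Y → ℝ) : Prop :=
  (∀ x1 x2 j i1 i2 y, 0 ≤ P x1 x2 j i1 i2 y) ∧
  (∀ i1 i2 y, ∑ x1, ∑ x2, ∑ j, P x1 x2 j i1 i2 y = 1) ∧
  (∀ x2 j i1 i1' i2 y, ∑ x1, P x1 x2 j i1 i2 y = ∑ x1, P x1 x2 j i1' i2 y) ∧
  (∀ x1 j i1 i2 i2' y, ∑ x2, P x1 x2 j i1 i2 y = ∑ x2, P x1 x2 j i1 i2' y) ∧
  (∀ x1 x2 i1 i2 y y', ∑ j, P x1 x2 j i1 i2 y = ∑ j, P x1 x2 j i1 i2 y')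

/-- `S(W,k1,k2)`: maximum joint success probability with classical (unassisted)
stochastic encoders and decoder. -/
noncomputable def S [Fintype X1] [Fintype X2] [Fintype Y]
    (W : X1 → X2 → Y → ℝ) (k1 k2 : ℕ) : ℝ :=
  sSup {s : ℝ | ∃ (e1 : Fin k1 → X1 → ℝ) (e2 : Fin k2 → X2 → ℝ)
      (d : Y → Fin k1 → Fin k2 → ℝ),
    (∀ i1 x1, 0 ≤ e1 i1 x1) ∧ (∀ i1, ∑ x1, e1 i1 x1 = 1) ∧
    (∀ i2 x2, 0 ≤ e2 i2 x2) ∧ (∀ i2, ∑ x2, e2 i2 x2 = 1) ∧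
    (∀ y j1 j2, 0 ≤ d y j1 j2) ∧ (∀ y, ∑ j1, ∑ j2, d y j1 j2 = 1) ∧
    s = (1 / ((k1 : ℝ) * (k2 : ℝ))) * ∑ i1, ∑ i2, ∑ x1, ∑ x2, ∑ y,
      W x1 x2 y * e1 i1 x1 * e2 i2 x2 * d y i1 i2}

/-- `S^{NS}(W,k1,k2)`: maximum joint success probability with (tripartite)
non-signaling assistance, i.e. with decoder output alphabet `[k1] × [k2]`. -/
noncomputable def SNS [Fintype X1] [Fintype X2] [Fintype Y]
    (W : X1 → X2 → Y → ℝ) (k1 k2 : ℕ) : ℝ :=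
  sSup {s : ℝ | ∃ P : X1 → X2 → Fin k1 × Fin k2 → Fin k1 → Fin k2 → Y → ℝ,
    IsNSBox k1 k2 P ∧
    s = (1 / ((k1 : ℝ) * (k2 : ℝ))) * ∑ i1, ∑ i2, ∑ x1, ∑ x2, ∑ y,
      W x1 x2 y * P x1 x2 (i1, i2) i1 i2 y}

/-- `⌈2^{R n}⌉`, the number of messages at rate `R` for blocklength `n`. -/
noncomputable def nMsg (R : ℝ) (n : ℕ) : ℕ := ⌈(2 : ℝ) ^ (R * (n : ℝ))⌉₊

/-- The (unassisted) capacity region `C(W)`. -/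
noncomputable def capacityRegion [Fintype X1] [Fintype X2] [Fintype Y]
    (W : X1 → X2 → Y → ℝ) : Set (ℝ × ℝ) :=
  closure {p : ℝ × ℝ |
    Tendsto (fun n : ℕ => S (macPow n W) (nMsg p.1 n) (nMsg p.2 n)) atTop (𝓝 1)}

/-- The non-signaling assisted capacity region `C^{NS}(W)`. -/
noncomputable def capacityRegionNS [Fintype X1] [Fintype X2] [Fintype Y]
    (W : X1 → X2 → Y → ℝ) : Set (ℝ × ℝ) :=
  closure {p : ℝ × ℝ |
    Tendsto (fun n : ℕ => SNS (macPow n W) (nMsg p.1 n) (nMsg p.2 n)) atTop (𝓝 1)}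

/-- The concatenated MAC `W[P] : [k1] × [k2] → [ℓ]` obtained by composing `W` with a
non-signaling box `P`. -/
noncomputable def concatMAC [Fintype X1] [Fintype X2] [Fintype Y] {k1 k2 ℓ : ℕ}
    (W : X1 → X2 → Y → ℝ) (P : X1 → X2 → Fin ℓ → Fin k1 → Fin k2 → Y → ℝ) :
    Fin k1 → Fin k2 → Fin ℓ → ℝ :=
  fun i1 i2 j => ∑ x1, ∑ x2, ∑ y, W x1 x2 y * P x1 x2 j i1 i2 y

end Defs

/-!
A classical code for `W[P]` is turned into a non-signaling strategy for `W` by absorbing the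
encoders and the decoder into the box: the senders feed their codewords into `P`, and the receiver
decodes the box output. Since classical pre- and post-processing preserves non-signaling, and the
success probability is unchanged, `S(W[P]^{⊗n}) ≤ S^NS(W^{⊗n})`. For blocklength `n` one applies
this to `W[P]^{⊗n} = W^{⊗n}[P^{⊗n}]`, using that the tensor power of a non-signaling box is
non-signaling. As `S^NS ≤ 1`, success probabilities tending to `1` for `W[P]` force the same for
`W` with non-signaling assistance.
-/

lemma sum_mul_eq_sum_mul_of_forall_eq {α : Type*} [Fintype α] {e e' : α → ℝ}
    (he : ∑ a, e a = 1) (he' : ∑ a, e' a = 1) {G : α → ℝ} (hG : ∀ a a', G a = G a') :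
    ∑ a, e a * G a = ∑ a, e' a * G a := by
  obtain ⟨a₀, -, -⟩ := Finset.exists_ne_zero_of_sum_ne_zero (he.symm ▸ one_ne_zero)
  have hconst (e : α → ℝ) (he : ∑ a, e a = 1) : ∑ a, e a * G a = G a₀ := by
    simp_rw [hG _ a₀, ← Finset.sum_mul, he, one_mul]
  rw [hconst e he, hconst e' he']

section Stochastic

variable {α β : Type*} [Fintype β]

def IsStochastic (e : α → β → ℝ) : Prop :=
  (∀ a b, 0 ≤ e a b) ∧ ∀ a, ∑ b, e a b = 1

lemma isStochastic_const_single [DecidableEq β] (b₀ : β) :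
    IsStochastic (fun (_ : α) => (Pi.single b₀ 1 : β → ℝ)) :=
  ⟨fun _ => (Pi.single_nonneg.2 zero_le_one : 0 ≤ (Pi.single b₀ 1 : β → ℝ)), fun _ => by simp⟩

lemma isStochastic_uncurry_iff {γ : Type*} [Fintype γ] {d : α → β → γ → ℝ} :
    IsStochastic (fun a (p : β × γ) => d a p.1 p.2) ↔
      (∀ a b c, 0 ≤ d a b c) ∧ ∀ a, ∑ b, ∑ c, d a b c = 1 := by
  simp only [IsStochastic, Prod.forall, Fintype.sum_prod_type]

end Stochastic

section NonSignaling

variable {X1 X2 Y J I1 I2 : Type*} [Fintype X1] [Fintype X2] [Fintype J]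

/-- `IsNSBox` for arbitrary input alphabets, so as to cover the tensor powers `boxPow n P`, whose
inputs range over `Fin n → Fin k`; `concatChannel` generalizes `concatMAC` in the same way. -/
structure IsNonSignaling (P : X1 → X2 → J → I1 → I2 → Y → ℝ) : Prop where
  nonneg : ∀ x1 x2 j i1 i2 y, 0 ≤ P x1 x2 j i1 i2 y
  sum_eq_one : ∀ i1 i2 y, ∑ x1, ∑ x2, ∑ j, P x1 x2 j i1 i2 y = 1
  sum_x1_eq : ∀ x2 j i1 i1' i2 y, ∑ x1, P x1 x2 j i1 i2 y = ∑ x1, P x1 x2 j i1' i2 y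
  sum_x2_eq : ∀ x1 j i1 i2 i2' y, ∑ x2, P x1 x2 j i1 i2 y = ∑ x2, P x1 x2 j i1 i2' y
  sum_j_eq : ∀ x1 x2 i1 i2 y y', ∑ j, P x1 x2 j i1 i2 y = ∑ j, P x1 x2 j i1 i2 y'

lemma isNSBox_iff [Fintype Y] {k1 k2 : ℕ} {P : X1 → X2 → J → Fin k1 → Fin k2 → Y → ℝ} :
    IsNSBox k1 k2 P ↔ IsNonSignaling P :=
  ⟨fun ⟨h0, h1, h2, h3, h4⟩ => ⟨h0, h1, h2, h3, h4⟩, fun ⟨h0, h1, h2, h3, h4⟩ => ⟨h0, h1, h2, h3, h4⟩⟩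

def boxPow (n : ℕ) (P : X1 → X2 → J → I1 → I2 → Y → ℝ) :
    (Fin n → X1) → (Fin n → X2) → (Fin n → J) → (Fin n → I1) → (Fin n → I2) → (Fin n → Y) →
      ℝ :=
  fun x1 x2 j i1 i2 y => ∏ t, P (x1 t) (x2 t) (j t) (i1 t) (i2 t) (y t)

lemma IsNonSignaling.boxPow {P : X1 → X2 → J → I1 → I2 → Y → ℝ} (hP : IsNonSignaling P)
    (n : ℕ) : IsNonSignaling (boxPow n P) where
  nonneg _ _ _ _ _ _ := Finset.prod_nonneg fun _ _ => hP.nonneg ..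
  sum_eq_one i1 i2 y := by
    unfold _root_.boxPow
    calc ∑ x1 : Fin n → X1, ∑ x2 : Fin n → X2, ∑ j : Fin n → J,
          ∏ t, P (x1 t) (x2 t) (j t) (i1 t) (i2 t) (y t)
        = ∑ x1 : Fin n → X1, ∑ x2 : Fin n → X2,
          ∏ t, ∑ j, P (x1 t) (x2 t) j (i1 t) (i2 t) (y t) :=
      Finset.sum_congr rfl fun x1 _ => Finset.sum_congr rfl fun x2 _ =>
        (Fintype.prod_sum fun t j => P (x1 t) (x2 t) j (i1 t) (i2 t) (y t)).symm
    _ = ∑ x1 : Fin n → X1, ∏ t, ∑ x2, ∑ j, P (x1 t) x2 j (i1 t) (i2 t) (y t) :=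
      Finset.sum_congr rfl fun x1 _ =>
        (Fintype.prod_sum fun t x2 => ∑ j, P (x1 t) x2 j (i1 t) (i2 t) (y t)).symm
    _ = ∏ t, ∑ x1, ∑ x2, ∑ j, P x1 x2 j (i1 t) (i2 t) (y t) :=
      (Fintype.prod_sum fun t x1 => ∑ x2, ∑ j, P x1 x2 j (i1 t) (i2 t) (y t)).symm
    _ = 1 := Finset.prod_eq_one fun t _ => hP.sum_eq_one ..
  sum_x1_eq x2 j i1 i1' i2 y := by
    unfold _root_.boxPow
    rw [← Fintype.prod_sum (fun t x1 => P x1 (x2 t) (j t) (i1 t) (i2 t) (y t)),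
      ← Fintype.prod_sum (fun t x1 => P x1 (x2 t) (j t) (i1' t) (i2 t) (y t))]
    exact Finset.prod_congr rfl fun t _ => hP.sum_x1_eq ..
  sum_x2_eq x1 j i1 i2 i2' y := by
    unfold _root_.boxPow
    rw [← Fintype.prod_sum (fun t x2 => P (x1 t) x2 (j t) (i1 t) (i2 t) (y t)),
      ← Fintype.prod_sum (fun t x2 => P (x1 t) x2 (j t) (i1 t) (i2' t) (y t))]
    exact Finset.prod_congr rfl fun t _ => hP.sum_x2_eq ..
  sum_j_eq x1 x2 i1 i2 y y' := by
    unfold _root_.boxPow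
    rw [← Fintype.prod_sum (fun t j => P (x1 t) (x2 t) j (i1 t) (i2 t) (y t)),
      ← Fintype.prod_sum (fun t j => P (x1 t) (x2 t) j (i1 t) (i2 t) (y' t))]
    exact Finset.prod_congr rfl fun t _ => hP.sum_j_eq ..

end NonSignaling

section Composition

variable {X1 X2 Y A1 A2 L K1 K2 J : Type*} [Fintype A1] [Fintype A2] [Fintype L]

def composeBox (e1 : K1 → A1 → ℝ) (e2 : K2 → A2 → ℝ) (Q : X1 → X2 → L → A1 → A2 → Y → ℝ)
    (d : L → J → ℝ) : X1 → X2 → J → K1 → K2 → Y → ℝ :=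
  fun x1 x2 j k1 k2 y => ∑ a1, e1 k1 a1 * ∑ a2, e2 k2 a2 * ∑ b, Q x1 x2 b a1 a2 y * d b j

variable (e1 : K1 → A1 → ℝ) (e2 : K2 → A2 → ℝ) (Q : X1 → X2 → L → A1 → A2 → Y → ℝ)

lemma sum_x1_composeBox [Fintype X1] (d : L → J → ℝ) (x2 j k1 k2 y) :
    ∑ x1, composeBox e1 e2 Q d x1 x2 j k1 k2 y =
      ∑ a1, e1 k1 a1 * ∑ a2, e2 k2 a2 * ∑ b, (∑ x1, Q x1 x2 b a1 a2 y) * d b j := by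
  simp only [composeBox, Finset.mul_sum, Finset.sum_mul]
  simp_rw [Finset.sum_comm (s := (univ : Finset X1))]

lemma sum_x2_composeBox [Fintype X2] (d : L → J → ℝ) (x1 j k1 k2 y) :
    ∑ x2, composeBox e1 e2 Q d x1 x2 j k1 k2 y =
      ∑ a1, e1 k1 a1 * ∑ a2, e2 k2 a2 * ∑ b, (∑ x2, Q x1 x2 b a1 a2 y) * d b j := by
  simp only [composeBox, Finset.mul_sum, Finset.sum_mul]
  simp_rw [Finset.sum_comm (s := (univ : Finset X2))]

lemma sum_j_composeBox [Fintype J] {d : L → J → ℝ} (hd : IsStochastic d) (x1 x2 k1 k2 y) :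
    ∑ j, composeBox e1 e2 Q d x1 x2 j k1 k2 y =
      ∑ a1, e1 k1 a1 * ∑ a2, e2 k2 a2 * ∑ b, Q x1 x2 b a1 a2 y := by
  simp only [composeBox, Finset.mul_sum]
  simp_rw [Finset.sum_comm (s := (univ : Finset J)), ← Finset.mul_sum, hd.2, mul_one]

variable {e1 e2 Q}

lemma IsNonSignaling.composeBox [Fintype X1] [Fintype X2] [Fintype J] (hQ : IsNonSignaling Q)
    (he1 : IsStochastic e1) (he2 : IsStochastic e2) {d : L → J → ℝ} (hd : IsStochastic d) :
    IsNonSignaling (composeBox e1 e2 Q d) where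
  nonneg x1 x2 j k1 k2 y :=
    Finset.sum_nonneg fun a1 _ => mul_nonneg (he1.1 ..) <|
      Finset.sum_nonneg fun a2 _ => mul_nonneg (he2.1 ..) <|
        Finset.sum_nonneg fun b _ => mul_nonneg (hQ.nonneg ..) (hd.1 ..)
  sum_eq_one k1 k2 y :=
    calc ∑ x1, ∑ x2, ∑ j, _root_.composeBox e1 e2 Q d x1 x2 j k1 k2 y
        = ∑ a1, e1 k1 a1 * ∑ a2, e2 k2 a2 * ∑ x1, ∑ x2, ∑ b, Q x1 x2 b a1 a2 y := by
          simp only [sum_j_composeBox e1 e2 Q hd, Finset.mul_sum]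
          simp_rw [Finset.sum_comm (s := (univ : Finset X1)),
            Finset.sum_comm (s := (univ : Finset X2))]
      _ = 1 := by simp only [hQ.sum_eq_one, mul_one, he2.2, he1.2]
  sum_x1_eq x2 j k1 k1' k2 y := by
    simp_rw [sum_x1_composeBox]
    refine sum_mul_eq_sum_mul_of_forall_eq (he1.2 k1) (he1.2 k1') fun a1 a1' => ?_
    simp_rw [hQ.sum_x1_eq x2 _ a1 a1']
  sum_x2_eq x1 j k1 k2 k2' y := by
    simp_rw [sum_x2_composeBox]
    refine Finset.sum_congr rfl fun a1 _ => congrArg _ ?_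
    refine sum_mul_eq_sum_mul_of_forall_eq (he2.2 k2) (he2.2 k2') fun a2 a2' => ?_
    simp_rw [hQ.sum_x2_eq x1 _ a1 a2 a2']
  sum_j_eq x1 x2 k1 k2 y y' := by
    simp_rw [sum_j_composeBox e1 e2 Q hd, hQ.sum_j_eq x1 x2 _ _ y y']

end Composition

section Concatenation

variable {X1 X2 Y A1 A2 L : Type*} [Fintype X1] [Fintype X2] [Fintype Y]

def concatChannel (W : X1 → X2 → Y → ℝ) (Q : X1 → X2 → L → A1 → A2 → Y → ℝ) :
    A1 → A2 → L → ℝ :=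
  fun a1 a2 b => ∑ x1, ∑ x2, ∑ y, W x1 x2 y * Q x1 x2 b a1 a2 y

lemma concatMAC_eq_concatChannel {k1 k2 ℓ : ℕ} (W : X1 → X2 → Y → ℝ)
    (P : X1 → X2 → Fin ℓ → Fin k1 → Fin k2 → Y → ℝ) : concatMAC W P = concatChannel W P :=
  rfl

lemma macPow_concatChannel (n : ℕ) (W : X1 → X2 → Y → ℝ)
    (Q : X1 → X2 → L → A1 → A2 → Y → ℝ) :
    macPow n (concatChannel W Q) = concatChannel (macPow n W) (boxPow n Q) := by
  funext a1 a2 b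
  calc ∏ t, ∑ x1, ∑ x2, ∑ y, W x1 x2 y * Q x1 x2 (b t) (a1 t) (a2 t) y
      = ∑ x1 : Fin n → X1, ∏ t, ∑ x2, ∑ y,
          W (x1 t) x2 y * Q (x1 t) x2 (b t) (a1 t) (a2 t) y :=
        Fintype.prod_sum fun t x1 => ∑ x2, ∑ y, W x1 x2 y * Q x1 x2 (b t) (a1 t) (a2 t) y
    _ = ∑ x1 : Fin n → X1, ∑ x2 : Fin n → X2, ∏ t, ∑ y,
          W (x1 t) (x2 t) y * Q (x1 t) (x2 t) (b t) (a1 t) (a2 t) y :=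
        Finset.sum_congr rfl fun x1 _ => Fintype.prod_sum fun t x2 => ∑ y,
          W (x1 t) x2 y * Q (x1 t) x2 (b t) (a1 t) (a2 t) y
    _ = ∑ x1 : Fin n → X1, ∑ x2 : Fin n → X2, ∑ y : Fin n → Y, ∏ t,
          W (x1 t) (x2 t) (y t) * Q (x1 t) (x2 t) (b t) (a1 t) (a2 t) (y t) :=
        Finset.sum_congr rfl fun x1 _ => Finset.sum_congr rfl fun x2 _ => Fintype.prod_sum
          fun t y => W (x1 t) (x2 t) y * Q (x1 t) (x2 t) (b t) (a1 t) (a2 t) y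
    _ = _ := by simp only [Finset.prod_mul_distrib]; rfl

lemma sum_concatChannel_mul_eq {K1 K2 J : Type*} [Fintype A1] [Fintype A2] [Fintype L]
    (W : X1 → X2 → Y → ℝ) (Q : X1 → X2 → L → A1 → A2 → Y → ℝ) (e1 : K1 → A1 → ℝ)
    (e2 : K2 → A2 → ℝ) (d : L → J → ℝ) (k1 : K1) (k2 : K2) (j : J) :
    ∑ a1, ∑ a2, ∑ b, concatChannel W Q a1 a2 b * e1 k1 a1 * e2 k2 a2 * d b j =
      ∑ x1, ∑ x2, ∑ y, W x1 x2 y * composeBox e1 e2 Q d x1 x2 j k1 k2 y := by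
  simp only [concatChannel, composeBox, Finset.mul_sum, Finset.sum_mul]
  simp_rw [Finset.sum_comm (s := (univ : Finset A1)), Finset.sum_comm (s := (univ : Finset A2)),
    Finset.sum_comm (s := (univ : Finset L))]
  ac_rfl

end Concatenation

section SuccessProbability

variable {X1 X2 Y : Type*} {W : X1 → X2 → Y → ℝ}

lemma macPow_nonneg (hW0 : ∀ x1 x2 y, 0 ≤ W x1 x2 y) (n : ℕ) (x1 x2 y) :
    0 ≤ macPow n W x1 x2 y :=
  Finset.prod_nonneg fun _ _ => hW0 ..

lemma sum_macPow_eq_one [Fintype Y] (hW1 : ∀ x1 x2, ∑ y, W x1 x2 y = 1) (n : ℕ) (x1 x2) :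
    ∑ y, macPow n W x1 x2 y = 1 := by
  unfold macPow
  rw [← Fintype.prod_sum fun t y => W (x1 t) (x2 t) y]
  exact Finset.prod_eq_one fun t _ => hW1 ..

lemma sum_mul_nonSignaling_le_one [Fintype X1] [Fintype X2] [Fintype Y] {J I1 I2 : Type*}
    [Fintype J] (hW0 : ∀ x1 x2 y, 0 ≤ W x1 x2 y) (hW1 : ∀ x1 x2, ∑ y, W x1 x2 y = 1)
    {P : X1 → X2 → J → I1 → I2 → Y → ℝ} (hP : IsNonSignaling P) (j i1 i2) :
    ∑ x1, ∑ x2, ∑ y, W x1 x2 y * P x1 x2 j i1 i2 y ≤ 1 := by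
  rcases isEmpty_or_nonempty Y with hY | ⟨⟨y₀⟩⟩
  · simp
  calc ∑ x1, ∑ x2, ∑ y, W x1 x2 y * P x1 x2 j i1 i2 y
      ≤ ∑ x1, ∑ x2, ∑ y, W x1 x2 y * ∑ j', P x1 x2 j' i1 i2 y₀ := by
        gcongr with x1 _ x2 _ y _
        · exact hW0 ..
        · rw [← hP.sum_j_eq x1 x2 i1 i2 y y₀]
          exact Finset.single_le_sum (f := fun j' => P x1 x2 j' i1 i2 y)
            (fun j' _ => hP.nonneg ..) (Finset.mem_univ j)
    _ = ∑ x1, ∑ x2, ∑ j', P x1 x2 j' i1 i2 y₀ := by simp only [← Finset.sum_mul, hW1, one_mul]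
    _ = 1 := hP.sum_eq_one ..

lemma average_le_one {m1 m2 : ℕ} {f : Fin m1 → Fin m2 → ℝ} (hf : ∀ i1 i2, f i1 i2 ≤ 1) :
    1 / ((m1 : ℝ) * m2) * ∑ i1, ∑ i2, f i1 i2 ≤ 1 := by
  calc 1 / ((m1 : ℝ) * m2) * ∑ i1, ∑ i2, f i1 i2
      ≤ 1 / ((m1 : ℝ) * m2) * ∑ _i1 : Fin m1, ∑ _i2 : Fin m2, 1 := by gcongr; exact hf ..
    _ = 1 / ((m1 : ℝ) * m2) * (m1 * m2) := by simp
    _ ≤ 1 := by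
      rcases eq_or_ne ((m1 : ℝ) * m2) 0 with h | h
      · simp [h]
      · rw [one_div_mul_cancel h]

lemma SNS_le_one [Fintype X1] [Fintype X2] [Fintype Y] (hW0 : ∀ x1 x2 y, 0 ≤ W x1 x2 y)
    (hW1 : ∀ x1 x2, ∑ y, W x1 x2 y = 1) (m1 m2 : ℕ) : SNS W m1 m2 ≤ 1 := by
  refine Real.sSup_le ?_ zero_le_one
  rintro _ ⟨P, hP, rfl⟩
  exact average_le_one fun i1 i2 =>
    sum_mul_nonSignaling_le_one hW0 hW1 (isNSBox_iff.1 hP) (i1, i2) i1 i2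

end SuccessProbability

lemma S_concatChannel_le_SNS {X1 X2 Y A1 A2 L : Type*} [Fintype X1] [Fintype X2] [Fintype Y]
    [Fintype A1] [Fintype A2] [Fintype L] [Nonempty A1] [Nonempty A2]
    {W : X1 → X2 → Y → ℝ} (hW0 : ∀ x1 x2 y, 0 ≤ W x1 x2 y) (hW1 : ∀ x1 x2, ∑ y, W x1 x2 y = 1)
    {Q : X1 → X2 → L → A1 → A2 → Y → ℝ} (hQ : IsNonSignaling Q) {m1 m2 : ℕ} (hm1 : 0 < m1)
    (hm2 : 0 < m2) : S (concatChannel W Q) m1 m2 ≤ SNS W m1 m2 := by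
  classical
  obtain ⟨a1⟩ := ‹Nonempty A1›
  obtain ⟨a2⟩ := ‹Nonempty A2›
  let j₀ : Fin m1 × Fin m2 := (⟨0, hm1⟩, ⟨0, hm2⟩)
  have he1 := isStochastic_const_single (α := Fin m1) a1
  have he2 := isStochastic_const_single (α := Fin m2) a2
  obtain ⟨hd0, hd1⟩ := isStochastic_uncurry_iff (d := fun (_ : L) j1 j2 =>
    (Pi.single j₀ 1 : _ → ℝ) (j1, j2)) |>.1 (isStochastic_const_single j₀)
  refine csSup_le_csSup ⟨1, ?_⟩ ⟨_, _, _, _, he1.1, he1.2, he2.1, he2.2, hd0, hd1, rfl⟩ ?_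
  · rintro _ ⟨P, hP, rfl⟩
    exact average_le_one fun i1 i2 =>
      sum_mul_nonSignaling_le_one hW0 hW1 (isNSBox_iff.1 hP) (i1, i2) i1 i2
  · rintro _ ⟨e1, e2, d, he10, he11, he20, he21, hd0, hd1, rfl⟩
    refine ⟨_, isNSBox_iff.2 <|
      hQ.composeBox ⟨he10, he11⟩ ⟨he20, he21⟩ (isStochastic_uncurry_iff.2 ⟨hd0, hd1⟩), ?_⟩
    congr 1
    refine Finset.sum_congr rfl fun i1 _ => Finset.sum_congr rfl fun i2 _ => ?_
    exact sum_concatChannel_mul_eq W Q e1 e2 (fun b j => d b j.1 j.2) i1 i2 (i1, i2)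

lemma nMsg_pos (R : ℝ) (n : ℕ) : 0 < nMsg R n :=
  Nat.ceil_pos.mpr (by positivity)

theorem capacityRegion_concatMAC_subset_general {X1 X2 Y : Type*}
    [Fintype X1] [Fintype X2] [Fintype Y]
    (W : X1 → X2 → Y → ℝ)
    (hW0 : ∀ x1 x2 y, 0 ≤ W x1 x2 y)
    (hW1 : ∀ x1 x2, ∑ y, W x1 x2 y = 1)
    (k1 k2 ℓ : ℕ) (hk1 : 0 < k1) (hk2 : 0 < k2)
    (P : X1 → X2 → Fin ℓ → Fin k1 → Fin k2 → Y → ℝ)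
    (hP : IsNSBox k1 k2 P) :
    capacityRegion (concatMAC W P) ⊆ capacityRegionNS W := by
  have := Fin.pos_iff_nonempty.1 hk1
  have := Fin.pos_iff_nonempty.1 hk2
  refine closure_mono fun p hp => ?_
  have hle (n : ℕ) : S (macPow n (concatMAC W P)) (nMsg p.1 n) (nMsg p.2 n) ≤
      SNS (macPow n W) (nMsg p.1 n) (nMsg p.2 n) := by
    rw [concatMAC_eq_concatChannel, macPow_concatChannel]
    exact S_concatChannel_le_SNS (macPow_nonneg hW0 n) (sum_macPow_eq_one hW1 n)
      ((isNSBox_iff.1 hP).boxPow n) (nMsg_pos _ _) (nMsg_pos _ _)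
  exact tendsto_of_tendsto_of_tendsto_of_le_of_le hp tendsto_const_nhds hle fun n =>
    SNS_le_one (macPow_nonneg hW0 n) (sum_macPow_eq_one hW1 n) _ _

/-- Concatenated codes: for any non-signaling box `P`, the unassisted capacity region
of the concatenated channel `W[P]` is contained in the non-signaling assisted
capacity region of `W`: `C(W[P]) ⊆ C^{NS}(W)`. -/
theorem capacityRegion_concatMAC_subset {X1 X2 Y : Type*}
    [Fintype X1] [Fintype X2] [Fintype Y]
    (W : X1 → X2 → Y → ℝ)
    (hW0 : ∀ x1 x2 y, 0 ≤ W x1 x2 y)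
    (hW1 : ∀ x1 x2, ∑ y, W x1 x2 y = 1)
    (k1 k2 ℓ : ℕ) (hk1 : 0 < k1) (hk2 : 0 < k2) (hℓ : 0 < ℓ)
    (P : X1 → X2 → Fin ℓ → Fin k1 → Fin k2 → Y → ℝ)
    (hP : IsNSBox k1 k2 P) :
    capacityRegion (concatMAC W P) ⊆ capacityRegionNS W :=
  capacityRegion_concatMAC_subset_general W hW0 hW1 k1 k2 ℓ hk1 hk2 P hP
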